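/- arXiv:2409.13858 — 4 statements merged into one kernel-verified Lean document; each statement's English description precedes it below -/
import Mathlib

section
/- Fix x ∈ (0,1), constants δ̂ > 0 and γ̂ ∈ ℝ, and γ ∈ ℝ, and define m(δ) = c(x; δ̂·δ^{γ̂}, γ·γ̂). Then the function δ ↦ log( m(δ) ) is differentiable on (0, ∞) with derivative (γ̂/δ) · (1 − m(δ)). -/
/-- The Linear Log Odds (LLO) recalibration function. -/
noncomputable def llo (x δ γ : ℝ) : ℝ := δ * x ^ γ / (δ * x ^ γ + (1 - x) ^ γ)

theorem log_llo_mle_hasDerivAt_delta (x δhat γhat γ : ℝ)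
    (hx0 : 0 < x) (hx1 : x < 1) (hδhat : 0 < δhat) :
    ∀ δ : ℝ, 0 < δ →
      HasDerivAt (fun d : ℝ => Real.log (llo x (δhat * d ^ γhat) (γ * γhat)))
        ((γhat / δ) * (1 - llo x (δhat * δ ^ γhat) (γ * γhat))) δ := by
  intro δ hδ
  have hA : 0 < x ^ (γ * γhat) := Real.rpow_pos_of_pos hx0 _
  have hB : 0 < (1 - x) ^ (γ * γhat) := Real.rpow_pos_of_pos (by linarith) _
  set A := x ^ (γ * γhat) with hAdef
  set B := (1 - x) ^ (γ * γhat) with hBdef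
  have key : ∀ d : ℝ, 0 < d →
      Real.log (llo x (δhat * d ^ γhat) (γ * γhat))
        = γhat * Real.log d + Real.log (δhat * A)
          - Real.log (δhat * d ^ γhat * A + B) := by
    intro d hd
    have hdp : 0 < d ^ γhat := Real.rpow_pos_of_pos hd _
    have hu : 0 < δhat * d ^ γhat * A := by positivity
    have hv : 0 < δhat * d ^ γhat * A + B := by positivity
    rw [llo, Real.log_div (ne_of_gt hu) (ne_of_gt hv)]
    congr 1
    rw [show δhat * d ^ γhat * A = d ^ γhat * (δhat * A) by ring,
      Real.log_mul (ne_of_gt hdp) (by positivity), Real.log_rpow hd]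
  have hδp : 0 < δ ^ γhat := Real.rpow_pos_of_pos hδ _
  have hv : δhat * δ ^ γhat * A + B ≠ 0 := by positivity
  have h1 : HasDerivAt (fun d : ℝ => γhat * Real.log d + Real.log (δhat * A)
      - Real.log (δhat * d ^ γhat * A + B))
      (γhat * δ⁻¹ - δhat * (γhat * δ ^ (γhat - 1)) * A / (δhat * δ ^ γhat * A + B)) δ := by
    have hlog : HasDerivAt (fun d : ℝ => γhat * Real.log d) (γhat * δ⁻¹) δ := by
      simpa [mul_comm] using (Real.hasDerivAt_log hδ.ne').const_mul γhat
    have hinner : HasDerivAt (fun d : ℝ => δhat * d ^ γhat * A + B)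
        (δhat * (γhat * δ ^ (γhat - 1)) * A) δ :=
      (((Real.hasDerivAt_rpow_const (Or.inl hδ.ne')).const_mul δhat).mul_const A).add_const B
    exact (hlog.add_const _).sub (hinner.log hv)
  have heq : (fun d : ℝ => Real.log (llo x (δhat * d ^ γhat) (γ * γhat)))
      =ᶠ[nhds δ] (fun d => γhat * Real.log d + Real.log (δhat * A)
        - Real.log (δhat * d ^ γhat * A + B)) := by
    filter_upwards [eventually_gt_nhds hδ] with d hd using key d hd
  have h2 := h1.congr_of_eventuallyEq heq
  refine h2.congr_deriv ?_
  have hrw : δ ^ (γhat - 1) = δ ^ γhat / δ := by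
    rw [Real.rpow_sub hδ, Real.rpow_one]
  rw [llo, hrw, ← hAdef, ← hBdef]
  field_simp
end

section
/- Fix τ ∈ ℝ. Then the function γ ↦ h(τ, γ) is differentiable on ℝ with derivative ∂h/∂γ = Σ_{i=1}^n log( x_i / (1 − x_i) ) · ( c(x_i; exp(τ), γ) − y_i ). -/
open Finset

/-- The negative log likelihood in the parameterization τ = log δ. -/
noncomputable def negLogLik (n : ℕ) (x y : Fin n → ℝ) (τ γ : ℝ) : ℝ :=
  -∑ i, (y i * Real.log (llo (x i) (Real.exp τ) γ) +
          (1 - y i) * Real.log (1 - llo (x i) (Real.exp τ) γ))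

lemma key_term (p d yi γ : ℝ) (hp : 0 < p) (hp1 : p < 1) (hd : 0 < d) :
    HasDerivAt (fun g : ℝ => yi * Real.log (llo p d g) +
        (1 - yi) * Real.log (1 - llo p d g))
      (Real.log (p / (1 - p)) * (yi - llo p d γ)) γ := by
  have hp1' : 0 < 1 - p := by linarith
  set A : ℝ := d * p ^ γ with hA
  set B : ℝ := (1 - p) ^ γ with hB
  have hApos : 0 < A := mul_pos hd (Real.rpow_pos_of_pos hp γ)
  have hBpos : 0 < B := Real.rpow_pos_of_pos hp1' γ
  have hSpos : 0 < A + B := by linarith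
  have hS : A + B ≠ 0 := ne_of_gt hSpos
  have hU : HasDerivAt (fun g : ℝ => d * p ^ g) (d * (p ^ γ * Real.log p)) γ :=
    ((Real.hasStrictDerivAt_const_rpow hp γ).hasDerivAt).const_mul d
  have hV : HasDerivAt (fun g : ℝ => (1 - p) ^ g) ((1 - p) ^ γ * Real.log (1 - p)) γ :=
    (Real.hasStrictDerivAt_const_rpow hp1' γ).hasDerivAt
  have hF : HasDerivAt (fun g : ℝ => llo p d g)
      ((d * (p ^ γ * Real.log p) * (A + B) -
        A * (d * (p ^ γ * Real.log p) + (1 - p) ^ γ * Real.log (1 - p))) / (A + B) ^ 2) γ := by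
    simpa [llo, hA, hB] using hU.fun_div (hU.add hV) hS
  have hllo : llo p d γ = A / (A + B) := by simp [llo, hA, hB]
  have hfpos : 0 < llo p d γ := by rw [hllo]; positivity
  have h1f : 1 - llo p d γ = B / (A + B) := by
    rw [hllo]; field_simp; ring
  have h1fpos : 0 < 1 - llo p d γ := by rw [h1f]; positivity
  have hlogf := hF.log (ne_of_gt hfpos)
  have hlog1f := (((hasDerivAt_const γ (1:ℝ)).fun_sub hF).log (ne_of_gt h1fpos))
  have hcomb := (hlogf.const_mul yi).add (hlog1f.const_mul (1 - yi))
  refine hcomb.congr_deriv ?_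
  rw [Real.log_div (ne_of_gt hp) (ne_of_gt hp1'), h1f, hllo]
  have hdB : d * (p ^ γ * Real.log p) = A * Real.log p := by rw [hA]; ring
  have hvB : (1 - p) ^ γ * Real.log (1 - p) = B * Real.log (1 - p) := by rw [hB]
  rw [hdB, hvB]
  have hA0 : A ≠ 0 := ne_of_gt hApos
  have hB0 : B ≠ 0 := ne_of_gt hBpos
  field_simp
  ring

theorem negLogLik_hasDerivAt_gamma (n : ℕ) (x y : Fin n → ℝ)
    (hx : ∀ i, x i ∈ Set.Ioo (0 : ℝ) 1) (hy : ∀ i, y i = 0 ∨ y i = 1) (τ : ℝ) :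
    ∀ γ : ℝ,
      HasDerivAt (fun g : ℝ => negLogLik n x y τ g)
        (∑ i, Real.log (x i / (1 - x i)) * (llo (x i) (Real.exp τ) γ - y i)) γ := by
  intro γ
  have key : ∀ i : Fin n, HasDerivAt
      (fun g : ℝ => y i * Real.log (llo (x i) (Real.exp τ) g) +
        (1 - y i) * Real.log (1 - llo (x i) (Real.exp τ) g))
      (Real.log (x i / (1 - x i)) * (y i - llo (x i) (Real.exp τ) γ)) γ :=
    fun i => key_term (x i) (Real.exp τ) (y i) γ (hx i).1 (hx i).2 (Real.exp_pos τ)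
  have hsum : HasDerivAt
      (fun g : ℝ => ∑ i, (y i * Real.log (llo (x i) (Real.exp τ) g) +
        (1 - y i) * Real.log (1 - llo (x i) (Real.exp τ) g)))
      (∑ i, Real.log (x i / (1 - x i)) * (y i - llo (x i) (Real.exp τ) γ)) γ :=
    HasDerivAt.fun_sum fun i _ => key i
  unfold negLogLik
  refine hsum.neg.congr_deriv ?_
  rw [← Finset.sum_neg_distrib]
  exact Finset.sum_congr rfl fun i _ => by ring
end

section
/- Fix γ ∈ ℝ and δ > 0 with n ≥ 2, and write x_i' = c(x_i; δ, γ) and x̄' = (1/n)·Σ_{j=1}^n x_j'. Suppose the x_i' are not all equal, so sd(x') > 0. Then the function δ ↦ f(δ, γ) = −sd( (c(x_1; δ, γ), …, c(x_n; δ, γ)) ) is differentiable at δ with derivative ∂f/∂δ = −( 1 / ( δ·(n−1)·sd(x') ) ) · Σ_{i=1}^n (x_i' − x̄') · ( x_i'·(1 − x_i') − (1/n)·Σ_{j=1}^n x_j'·(1 − x_j') ). -/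
open Finset

/-- Sample standard deviation of a vector. -/
noncomputable def sd {n : ℕ} (v : Fin n → ℝ) : ℝ :=
  Real.sqrt ((∑ i, (v i - (∑ j, v j) / (n : ℝ)) ^ 2) / ((n : ℝ) - 1))

lemma llo_hasDerivAt (x γ δ : ℝ) (hx : x ∈ Set.Ioo (0:ℝ) 1) (hδ : 0 < δ) :
    HasDerivAt (fun d => llo x d γ) (llo x δ γ * (1 - llo x δ γ) / δ) δ := by
  obtain ⟨hx0, hx1⟩ := hx
  have ha0 : 0 < x ^ γ := Real.rpow_pos_of_pos hx0 γ
  have hb0 : 0 < (1 - x) ^ γ := Real.rpow_pos_of_pos (by linarith) γ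
  set a := x ^ γ
  set b := (1 - x) ^ γ
  have hden : δ * a + b ≠ 0 := by positivity
  have h1 := ((hasDerivAt_id δ).mul_const a).div
      (((hasDerivAt_id δ).mul_const a).add_const b) hden
  simp only [id_eq, Pi.div_def] at h1
  refine HasDerivAt.congr_deriv h1 ?_
  simp only [llo]
  field_simp
  ring

theorem neg_sd_hasDerivAt_delta (n : ℕ) (hn : 2 ≤ n) (x : Fin n → ℝ)
    (hx : ∀ i, x i ∈ Set.Ioo (0 : ℝ) 1) (γ δ : ℝ) (hδ : 0 < δ)
    (hne : ∃ i j, llo (x i) δ γ ≠ llo (x j) δ γ) :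
    HasDerivAt (fun d : ℝ => -sd (fun i => llo (x i) d γ))
      (-(1 / (δ * ((n : ℝ) - 1) * sd (fun i => llo (x i) δ γ))) *
        ∑ i, (llo (x i) δ γ - (∑ j, llo (x j) δ γ) / (n : ℝ)) *
          (llo (x i) δ γ * (1 - llo (x i) δ γ) -
            (∑ j, llo (x j) δ γ * (1 - llo (x j) δ γ)) / (n : ℝ))) δ := by
  have hδ0 : δ ≠ 0 := ne_of_gt hδ
  have hn2 : (2:ℝ) ≤ (n:ℝ) := by exact_mod_cast hn
  have hn1 : (0:ℝ) < (n:ℝ) - 1 := by linarith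
  have hn1' : (n:ℝ) - 1 ≠ 0 := ne_of_gt hn1
  have hnne : (n:ℝ) ≠ 0 := by linarith
  set v : Fin n → ℝ := fun i => llo (x i) δ γ with hv
  set m : ℝ := (∑ j, v j) / (n:ℝ) with hm
  have hder : ∀ i, HasDerivAt (fun d => llo (x i) d γ) (v i * (1 - v i) / δ) δ :=
    fun i => llo_hasDerivAt _ _ _ (hx i) hδ
  have hmean : HasDerivAt (fun d => (∑ j, llo (x j) d γ) / (n:ℝ))
      ((∑ j, v j * (1 - v j) / δ) / (n:ℝ)) δ :=
    (HasDerivAt.fun_sum fun j _ => hder j).div_const _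
  have hS : HasDerivAt
      (fun d => (∑ i, (llo (x i) d γ - (∑ j, llo (x j) d γ)/(n:ℝ))^2) / ((n:ℝ)-1))
      ((∑ i, 2 * (v i - m) * (v i * (1 - v i)/δ - (∑ j, v j * (1 - v j)/δ)/(n:ℝ)))
        / ((n:ℝ)-1)) δ := by
    apply HasDerivAt.div_const
    apply HasDerivAt.fun_sum
    intro i _
    have h := ((hder i).sub hmean).pow 2
    refine HasDerivAt.congr_deriv h ?_
    simp only [Pi.sub_apply]
    push_cast
    simp only [hm, hv]
    ring
  have hSpos : 0 < ∑ i, (v i - m)^2 := by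
    have h0 : 0 ≤ ∑ i, (v i - m)^2 := Finset.sum_nonneg fun i _ => sq_nonneg _
    rcases h0.lt_or_eq with h | h
    · exact h
    · exfalso
      obtain ⟨i0, j0, hij⟩ := hne
      have hz := (Finset.sum_eq_zero_iff_of_nonneg (fun i _ => sq_nonneg (v i - m))).mp h.symm
      have hi : v i0 = m := by have := sq_eq_zero_iff.mp (hz i0 (mem_univ _)); linarith
      have hj : v j0 = m := by have := sq_eq_zero_iff.mp (hz j0 (mem_univ _)); linarith
      exact hij (hi.trans hj.symm)
  have hgpos : 0 < (∑ i, (v i - m)^2) / ((n:ℝ)-1) := div_pos hSpos hn1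
  have hsd : sd v = Real.sqrt ((∑ i, (v i - m)^2) / ((n:ℝ)-1)) := rfl
  have hsdpos : 0 < sd v := by rw [hsd]; exact Real.sqrt_pos.mpr hgpos
  have hsdne : sd v ≠ 0 := ne_of_gt hsdpos
  have hsqrt := (hS.sqrt (ne_of_gt hgpos)).neg
  refine HasDerivAt.congr_deriv hsqrt ?_
  rw [show Real.sqrt ((∑ i, (v i - m)^2) / ((n:ℝ)-1)) = sd v from rfl]
  have hsum : (∑ i, 2 * (v i - m) * (v i * (1 - v i)/δ - (∑ j, v j * (1 - v j)/δ)/(n:ℝ)))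
      = (2/δ) * ∑ i, (v i - m) * (v i * (1 - v i) - (∑ j, v j * (1 - v j))/(n:ℝ)) := by
    rw [Finset.mul_sum]
    refine Finset.sum_congr rfl fun i _ => ?_
    rw [← Finset.sum_div]
    field_simp
  rw [hsum]
  field_simp
  simp only [hm, hv]
  congr 1
  exact Finset.sum_congr rfl fun i _ => by ring
end

section
/- (Likelihood invariance under LLO adjustment.) Fix δ₀ > 0 and γ₀ ∈ ℝ with γ₀ ≠ 0, and let x_i' = c(x_i; δ₀, γ₀) for i = 1, …, n. Then the supremum of the LLO likelihood of the adjusted predictions equals that of the original predictions: sup over (δ, γ) ∈ (0, ∞) × ℝ of L_{x'}(δ, γ) equals sup over (δ, γ) ∈ (0, ∞) × ℝ of L_x(δ, γ). -/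
open Finset

/-- The LLO likelihood of predictions `x` with binary outcomes `y`. -/
noncomputable def lloLik (n : ℕ) (x y : Fin n → ℝ) (δ γ : ℝ) : ℝ :=
  ∏ i, (llo (x i) δ γ) ^ (y i) * (1 - llo (x i) δ γ) ^ (1 - y i)

lemma llo_comp (x δ₀ γ₀ δ γ : ℝ) (hx : x ∈ Set.Ioo (0 : ℝ) 1) (hδ₀ : 0 < δ₀) :
    llo (llo x δ₀ γ₀) δ γ = llo x (δ * δ₀ ^ γ) (γ₀ * γ) := by
  obtain ⟨hx0, hx1⟩ := hx
  have h1x : (0:ℝ) < 1 - x := by linarith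
  have hxp : (0:ℝ) < x ^ γ₀ := Real.rpow_pos_of_pos hx0 _
  have h1p : (0:ℝ) < (1 - x) ^ γ₀ := Real.rpow_pos_of_pos h1x _
  set D := δ₀ * x ^ γ₀ + (1 - x) ^ γ₀ with hD
  have hDpos : 0 < D := by positivity
  have hx' : llo x δ₀ γ₀ = δ₀ * x ^ γ₀ / D := rfl
  have h1x' : 1 - llo x δ₀ γ₀ = (1 - x) ^ γ₀ / D := by
    rw [hx']; field_simp; rw [hD]; ring
  have hnum : (llo x δ₀ γ₀) ^ γ = δ₀ ^ γ * x ^ (γ₀ * γ) / D ^ γ := by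
    rw [hx', Real.div_rpow (by positivity) hDpos.le,
      Real.mul_rpow hδ₀.le hxp.le, ← Real.rpow_mul hx0.le]
  have hden : (1 - llo x δ₀ γ₀) ^ γ = (1 - x) ^ (γ₀ * γ) / D ^ γ := by
    rw [h1x', Real.div_rpow h1p.le hDpos.le, ← Real.rpow_mul h1x.le]
  have hDγ : (0:ℝ) < D ^ γ := Real.rpow_pos_of_pos hDpos _
  have hout : llo (llo x δ₀ γ₀) δ γ
      = δ * (llo x δ₀ γ₀) ^ γ / (δ * (llo x δ₀ γ₀) ^ γ + (1 - llo x δ₀ γ₀) ^ γ) := rfl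
  rw [hout, hnum, hden, llo, mul_div_assoc', ← add_div,
    div_div_div_cancel_right₀ hDγ.ne', ← mul_assoc]

theorem lik_sup_invariant (n : ℕ) (x y : Fin n → ℝ)
    (hx : ∀ i, x i ∈ Set.Ioo (0 : ℝ) 1) (hy : ∀ i, y i = 0 ∨ y i = 1)
    (δ₀ γ₀ : ℝ) (hδ₀ : 0 < δ₀) (hγ₀ : γ₀ ≠ 0) :
    sSup {z : ℝ | ∃ δ γ : ℝ, 0 < δ ∧
        z = lloLik n (fun i => llo (x i) δ₀ γ₀) y δ γ} =
      sSup {z : ℝ | ∃ δ γ : ℝ, 0 < δ ∧ z = lloLik n x y δ γ} := by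
  have hlik : ∀ δ γ : ℝ, lloLik n (fun i => llo (x i) δ₀ γ₀) y δ γ =
      lloLik n x y (δ * δ₀ ^ γ) (γ₀ * γ) := by
    intro δ γ
    unfold lloLik
    refine Finset.prod_congr rfl fun i _ => ?_
    rw [llo_comp (x i) δ₀ γ₀ δ γ (hx i) hδ₀]
  congr 1
  ext z
  constructor
  · rintro ⟨δ, γ, hδ, rfl⟩
    exact ⟨δ * δ₀ ^ γ, γ₀ * γ, by positivity, hlik δ γ⟩
  · rintro ⟨δ, γ, hδ, rfl⟩
    refine ⟨δ * δ₀ ^ (-(γ / γ₀)), γ / γ₀, by positivity, ?_⟩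
    rw [hlik]
    congr 1
    · rw [mul_assoc, ← Real.rpow_add hδ₀]; simp
    · field_simp
end
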